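/- arXiv:1307.4156 — 2 statements merged into one kernel-verified Lean document; each statement's English description precedes it below -/
import Mathlib

section
/- Let 1 < q < ∞, v ∈ ℝⁿ with vᵢ > 0 for all i, and 0 < λ < ‖v‖_{q̄}. With ε = (‖v‖_{q̄} − λ)/‖v‖_{q̄}, cᵢ = (vᵢ − vᵢε)/(vᵢε)^{q−1}, c̲ = minᵢ cᵢ and c̄ = maxᵢ cᵢ, and φ(c) = λ(Σᵢ (ωᵢ^{−1}(c))^q)^{(1−q)/q} − c, one has 0 < c̲ ≤ c̄ and φ(c̲) ≥ 0. -/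
open scoped BigOperators

/-- The vector ℓq norm for a real exponent `q`. -/
noncomputable def lqNormR {n : ℕ} (q : ℝ) (x : Fin n → ℝ) : ℝ :=
  (∑ i, |x i| ^ q) ^ (1 / q)

/-! Write `xᵢ = ωᵢ⁻¹(c̲)`. Since `cᵢ` is exactly the parameter for which `vᵢε` is the root, and
the root decreases in `c`, we get `vᵢε ≤ xᵢ`, i.e. `0 ≤ vᵢ − xᵢ ≤ (1 − ε)vᵢ`. The root equation
gives `vᵢ − xᵢ = c̲ xᵢ^{q−1}`, and since `(q − 1)q̄ = q` the `ℓ^{q̄}` norm of `v − x` is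
`c̲ (∑ xᵢ^q)^{(q−1)/q}`. Monotonicity and homogeneity of the norm bound it by
`(1 − ε)‖v‖_{q̄} = λ`, which is `φ(c̲) ≥ 0`. -/

open Real Finset

section lqNormR

variable {n : ℕ} {p : ℝ}

theorem lqNormR_mono (hp : 0 < p) {x y : Fin n → ℝ} (h : ∀ i, |x i| ≤ |y i|) :
    lqNormR p x ≤ lqNormR p y :=
  rpow_le_rpow (sum_nonneg fun i _ => rpow_nonneg (abs_nonneg _) _)
    (sum_le_sum fun i _ => rpow_le_rpow (abs_nonneg _) (h i) hp.le) (by positivity)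

theorem lqNormR_const_mul (hp : 0 < p) (a : ℝ) (x : Fin n → ℝ) :
    lqNormR p (fun i => a * x i) = |a| * lqNormR p x := by
  have hsum : 0 ≤ ∑ i, |x i| ^ p := sum_nonneg fun i _ => rpow_nonneg (abs_nonneg _) _
  simp only [lqNormR, abs_mul, mul_rpow (abs_nonneg a) (abs_nonneg _), ← mul_sum]
  rw [mul_rpow (rpow_nonneg (abs_nonneg a) _) hsum, ← rpow_mul (abs_nonneg a),
    mul_one_div_cancel hp.ne', rpow_one]

end lqNormR

theorem le_of_add_mul_rpow_le {p c d x y : ℝ} (hp : 0 ≤ p) (hc : 0 ≤ c) (hcd : c ≤ d)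
    (hx : 0 ≤ x) (h : y + d * y ^ p ≤ x + c * x ^ p) : y ≤ x := by
  by_contra! hxy
  have hpow : c * x ^ p ≤ d * y ^ p :=
    mul_le_mul hcd (rpow_le_rpow hx hxy.le hp) (rpow_nonneg hx _) (hc.trans hcd)
  linarith

theorem lqNormR_conj_sub_eq {n : ℕ} {q c : ℝ} (hq : 1 < q) (hc : 0 ≤ c) {v x : Fin n → ℝ}
    (hx : ∀ i, 0 ≤ x i) (h : ∀ i, x i + c * x i ^ (q - 1) = v i) :
    lqNormR (q / (q - 1)) (v - x) = c * (∑ i, x i ^ q) ^ ((q - 1) / q) := by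
  have hq1 : q - 1 ≠ 0 := by linarith
  have hterm : ∀ i, |(v - x) i| ^ (q / (q - 1)) = c ^ (q / (q - 1)) * x i ^ q := by
    intro i
    have hsub : (v - x) i = c * x i ^ (q - 1) := by rw [Pi.sub_apply, ← h i]; ring
    rw [hsub, abs_of_nonneg (mul_nonneg hc (rpow_nonneg (hx i) _)),
      mul_rpow hc (rpow_nonneg (hx i) _), ← rpow_mul (hx i), mul_div_cancel₀ _ hq1]
  rw [lqNormR, sum_congr rfl fun i _ => hterm i, ← mul_sum,
    mul_rpow (rpow_nonneg hc _) (sum_nonneg fun i _ => rpow_nonneg (hx i) _),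
    ← rpow_mul hc, one_div_div,
    show q / (q - 1) * ((q - 1) / q) = 1 by field_simp, rpow_one]

theorem mul_sum_rpow_le_of_root {n : ℕ} {q c ε : ℝ} (hq : 1 < q) (hc : 0 ≤ c) (hε : ε ≤ 1)
    {v x : Fin n → ℝ} (hx : ∀ i, 0 ≤ x i) (h : ∀ i, x i + c * x i ^ (q - 1) = v i)
    (hxv : ∀ i, ε * v i ≤ x i) :
    c * (∑ i, x i ^ q) ^ ((q - 1) / q) ≤ (1 - ε) * lqNormR (q / (q - 1)) v := calc
  _ = lqNormR (q / (q - 1)) (v - x) := (lqNormR_conj_sub_eq hq hc hx h).symm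
  _ ≤ lqNormR (q / (q - 1)) (fun i => (1 - ε) * v i) := by
    refine lqNormR_mono (div_pos (by linarith) (by linarith)) fun i => ?_
    have hsub : 0 ≤ v i - x i := by
      rw [← h i, add_sub_cancel_left]; exact mul_nonneg hc (rpow_nonneg (hx i) _)
    exact abs_le_abs_of_nonneg hsub (by rw [Pi.sub_apply]; linarith [hxv i])
  _ = (1 - ε) * lqNormR (q / (q - 1)) v := by
    rw [lqNormR_const_mul (div_pos (by linarith) (by linarith)), abs_of_nonneg (by linarith)]

/-- Let `1 < q < ∞`, `v ∈ ℝⁿ` with `vᵢ > 0`, and `0 < λ < ‖v‖_{q̄}`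
(`q̄ = q/(q−1)`).  With `ε = (‖v‖_{q̄} − λ)/‖v‖_{q̄}`,
`cᵢ = (vᵢ − vᵢε)/(vᵢε)^{q−1}`, `c̲ = minᵢ cᵢ` and `c̄ = maxᵢ cᵢ`, and
`φ(c) = λ(∑ᵢ (ωᵢ⁻¹(c))^q)^{(1−q)/q} − c`, one has `0 < c̲ ≤ c̄` and
`φ(c̲) ≥ 0`. -/
theorem stmt8 {n : ℕ} [NeZero n] (q : ℝ) (hq : 1 < q)
    (v : Fin n → ℝ) (hv : ∀ i, 0 < v i) (lam : ℝ)
    (hlam : 0 < lam) (hlam' : lam < lqNormR (q / (q - 1)) v)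
    (winv : Fin n → ℝ → ℝ)
    (hwinv : ∀ i, ∀ c : ℝ, 0 ≤ c →
      winv i c ∈ Set.Ioc (0 : ℝ) (v i) ∧
        winv i c + c * winv i c ^ (q - 1) = v i) :
    let eps : ℝ := (lqNormR (q / (q - 1)) v - lam) / lqNormR (q / (q - 1)) v
    let cc : Fin n → ℝ := fun i => (v i - v i * eps) / (v i * eps) ^ (q - 1)
    let clow : ℝ := Finset.univ.inf' Finset.univ_nonempty cc
    let cbar : ℝ := Finset.univ.sup' Finset.univ_nonempty cc
    let phi : ℝ → ℝ := fun c => lam * (∑ i, winv i c ^ q) ^ ((1 - q) / q) - c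
    0 < clow ∧ clow ≤ cbar ∧ 0 ≤ phi clow := by
  intro eps cc clow cbar phi
  set N := lqNormR (q / (q - 1)) v
  have hN : 0 < N := hlam.trans hlam'
  have hone_sub_eps : 1 - eps = lam / N := by
    show 1 - (N - lam) / N = lam / N
    field_simp
    ring
  have hve : ∀ i, 0 < v i * eps := fun i => mul_pos (hv i) (div_pos (by linarith) hN)
  have hcc : ∀ i, 0 < cc i := fun i =>
    div_pos (by nlinarith [hv i, div_pos hlam hN]) (rpow_pos_of_pos (hve i) _)
  have hcc_root : ∀ i, v i * eps + cc i * (v i * eps) ^ (q - 1) = v i := fun i => by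
    rw [div_mul_cancel₀ _ (rpow_pos_of_pos (hve i) _).ne']; ring
  have hclow : 0 < clow := (lt_inf'_iff _).2 fun i _ => hcc i
  refine ⟨hclow, (inf'_le _ (mem_univ 0)).trans (le_sup' _ (mem_univ 0)), ?_⟩
  set x : Fin n → ℝ := fun i => winv i clow
  have hroot := fun i => hwinv i clow hclow.le
  have hx_ge : ∀ i, eps * v i ≤ x i := fun i => by
    rw [mul_comm]
    exact le_of_add_mul_rpow_le (p := q - 1) (d := cc i) (by linarith) hclow.le
      (inf'_le _ (mem_univ i)) (hroot i).1.1.le (by rw [hcc_root i, (hroot i).2])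
  have hbound := mul_sum_rpow_le_of_root hq hclow.le (by linarith [div_pos hlam hN])
    (fun i => (hroot i).1.1.le) (fun i => (hroot i).2) hx_ge
  rw [hone_sub_eps, div_mul_cancel₀ _ hN.ne'] at hbound
  have hS : 0 < ∑ i, x i ^ q := sum_pos (fun i _ => rpow_pos_of_pos (hroot i).1.1 _) univ_nonempty
  show 0 ≤ lam * (∑ i, x i ^ q) ^ ((1 - q) / q) - clow
  rw [show (1 - q) / q = -((q - 1) / q) by ring, rpow_neg hS.le, ← div_eq_mul_inv, sub_nonneg,
    le_div_iff₀ (rpow_pos_of_pos hS _)]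
  exact hbound
end

section
/- Let W* = (w*₁,…,w*_s) be a minimizer of the primal objective f(W) = (1/2)‖Y − Σᵢ Bᵢwᵢ‖₂² + λΣᵢ‖wᵢ‖_q. If ‖Bᵢᵀ(Y − Σⱼ Bⱼw*ⱼ)‖_{q̄} < λ for some group index i, then w*ᵢ = 0. -/
open scoped ENNReal BigOperators
open Matrix

/-- The vector ℓq norm for q ∈ [1,∞]. -/
noncomputable def lqNorm {n : ℕ} (q : ℝ≥0∞) (x : Fin n → ℝ) : ℝ :=
  if q = ⊤ then ⨆ i, |x i| else (∑ i, |x i| ^ q.toReal) ^ (1 / q.toReal)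

/-!
Shrinking the `i`-th group of a minimizer to `(1 - t) wᵢ` changes the objective by
`t (⟪r, Bᵢ wᵢ⟫ - λ ‖wᵢ‖_q) + O(t²)`, where `r` is the residual, so minimality forces
`λ ‖wᵢ‖_q ≤ ⟪Bᵢᵀ r, wᵢ⟫`. By Hölder's inequality the right side is at most
`‖Bᵢᵀ r‖_q̄ ‖wᵢ‖_q`, which is strictly smaller than `λ ‖wᵢ‖_q` unless `wᵢ = 0`.
-/

open Filter Topology

section lqNorm

variable {n : ℕ}

lemma lqNorm_top (x : Fin n → ℝ) : lqNorm ⊤ x = ⨆ i, |x i| := if_pos rfl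

lemma lqNorm_of_ne_top {q : ℝ≥0∞} (hq : q ≠ ⊤) (x : Fin n → ℝ) :
    lqNorm q x = (∑ i, |x i| ^ q.toReal) ^ (1 / q.toReal) := if_neg hq

lemma lqNorm_one (x : Fin n → ℝ) : lqNorm 1 x = ∑ i, |x i| := by
  simp [lqNorm_of_ne_top ENNReal.one_ne_top]

lemma abs_le_lqNorm_top (x : Fin n → ℝ) (l : Fin n) : |x l| ≤ lqNorm ⊤ x := by
  rw [lqNorm_top]
  exact le_ciSup (f := fun i => |x i|) (Finite.bddAbove_range _) l

lemma lqNorm_pos {q : ℝ≥0∞} {x : Fin n → ℝ} (hx : x ≠ 0) : 0 < lqNorm q x := by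
  obtain ⟨l, hl⟩ := Function.ne_iff.mp hx
  have hxl : 0 < |x l| := abs_pos.mpr hl
  by_cases hq : q = ⊤
  · subst hq
    exact hxl.trans_le (abs_le_lqNorm_top x l)
  · rw [lqNorm_of_ne_top hq]
    refine Real.rpow_pos_of_pos ?_ _
    exact (Real.rpow_pos_of_pos hxl _).trans_le
      (Finset.single_le_sum (fun i _ => Real.rpow_nonneg (abs_nonneg (x i)) _) (Finset.mem_univ l))

lemma lqNorm_smul {q : ℝ≥0∞} (hq : q ≠ 0) {a : ℝ} (ha : 0 ≤ a) (x : Fin n → ℝ) :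
    lqNorm q (a • x) = a * lqNorm q x := by
  have habs : ∀ l, |(a • x) l| = a * |x l| := fun l => by
    rw [Pi.smul_apply, smul_eq_mul, abs_mul, abs_of_nonneg ha]
  by_cases hqt : q = ⊤
  · subst hqt
    simp only [lqNorm_top, habs, Real.mul_iSup_of_nonneg ha]
  · have hq0 : q.toReal ≠ 0 := ENNReal.toReal_ne_zero.mpr ⟨hq, hqt⟩
    simp only [lqNorm_of_ne_top hqt, habs, Real.mul_rpow ha (abs_nonneg _), ← Finset.mul_sum]
    rw [Real.mul_rpow (Real.rpow_nonneg ha _) (Finset.sum_nonneg fun i _ => by positivity),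
      ← Real.rpow_mul ha, mul_one_div_cancel hq0, Real.rpow_one]

lemma dotProduct_le_lqNorm_top_mul_lqNorm_one (u w : Fin n → ℝ) :
    u ⬝ᵥ w ≤ lqNorm ⊤ u * lqNorm 1 w := by
  rw [lqNorm_one, Finset.mul_sum]
  refine Finset.sum_le_sum fun l _ => ?_
  calc u l * w l ≤ |u l| * |w l| := (le_abs_self _).trans (abs_mul _ _).le
    _ ≤ lqNorm ⊤ u * |w l| := by gcongr; exact abs_le_lqNorm_top u l

lemma dotProduct_le_lqNorm_mul_lqNorm {q qb : ℝ≥0∞} [q.HolderConjugate qb]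
    (u w : Fin n → ℝ) : u ⬝ᵥ w ≤ lqNorm qb u * lqNorm q w := by
  by_cases hq : q = ⊤
  · obtain rfl : qb = 1 := (ENNReal.HolderConjugate.eq_top_iff_eq_one q qb).mp hq
    subst hq
    rw [dotProduct_comm, mul_comm]
    exact dotProduct_le_lqNorm_top_mul_lqNorm_one w u
  by_cases hqb : qb = ⊤
  · obtain rfl : q = 1 := (ENNReal.HolderConjugate.eq_top_iff_eq_one qb q).mp hqb
    subst hqb
    exact dotProduct_le_lqNorm_top_mul_lqNorm_one u w
  rw [lqNorm_of_ne_top hq, lqNorm_of_ne_top hqb]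
  exact Real.inner_le_Lp_mul_Lq Finset.univ u w
    (ENNReal.HolderConjugate.toReal_of_ne_top hqb hq)

end lqNorm

lemma nonpos_of_forall_le_mul {a c : ℝ} (h : ∀ t : ℝ, 0 < t → t ≤ 1 → a ≤ t * c) : a ≤ 0 := by
  have hlim : Tendsto (fun t : ℝ => t * c) (𝓝[>] 0) (𝓝 0) := by
    simpa using ((tendsto_id (x := 𝓝 (0 : ℝ))).mul_const c).mono_left nhdsWithin_le_nhds
  refine ge_of_tendsto hlim ?_
  filter_upwards [Ioo_mem_nhdsGT (zero_lt_one' ℝ)] with t ht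
  exact h t ht.1 ht.2.le

section GroupLasso

variable {m s : ℕ} {p : Fin s → ℕ} (B : (i : Fin s) → Matrix (Fin m) (Fin (p i)) ℝ)
  (Y : Fin m → ℝ) (lam : ℝ) (q : ℝ≥0∞)

noncomputable def groupResidual (W : (i : Fin s) → Fin (p i) → ℝ) : Fin m → ℝ :=
  fun k => Y k - ∑ j, (B j).mulVec (W j) k

noncomputable def groupLassoObjective (W : (i : Fin s) → Fin (p i) → ℝ) : ℝ :=
  (1 / 2) * ∑ k, groupResidual B Y W k ^ 2 + lam * ∑ i, lqNorm q (W i)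

def shrinkGroup (W : (i : Fin s) → Fin (p i) → ℝ) (i : Fin s) (t : ℝ) :
    (j : Fin s) → Fin (p j) → ℝ :=
  fun j => (1 - (Pi.single i t : Fin s → ℝ) j) • W j

variable {B Y lam q}

lemma sum_one_sub_single_mul (i : Fin s) (t : ℝ) (x : Fin s → ℝ) :
    ∑ j, (1 - (Pi.single i t : Fin s → ℝ) j) * x j = ∑ j, x j - t * x i := by
  simp only [Pi.single_apply, sub_mul, one_mul, ite_mul, zero_mul, Finset.sum_sub_distrib,
    Finset.sum_ite_eq', Finset.mem_univ, if_true]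

lemma groupResidual_shrinkGroup (W : (i : Fin s) → Fin (p i) → ℝ) (i : Fin s) (t : ℝ) :
    groupResidual B Y (shrinkGroup W i t) = groupResidual B Y W + t • (B i).mulVec (W i) := by
  ext k
  have := sum_one_sub_single_mul i t fun j => (B j).mulVec (W j) k
  simp only [groupResidual, shrinkGroup, mulVec_smul, Pi.smul_apply, smul_eq_mul, Pi.add_apply]
  rw [this]
  ring

lemma sum_lqNorm_shrinkGroup (hq : q ≠ 0) (W : (i : Fin s) → Fin (p i) → ℝ) (i : Fin s) {t : ℝ}
    (ht : t ≤ 1) :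
    ∑ j, lqNorm q (shrinkGroup W i t j) = ∑ j, lqNorm q (W j) - t * lqNorm q (W i) := by
  have hcoef : ∀ j, 0 ≤ 1 - (Pi.single i t : Fin s → ℝ) j := fun j => by
    rcases eq_or_ne j i with rfl | hj
    · simpa using ht
    · simp [hj]
  simp only [shrinkGroup, lqNorm_smul hq (hcoef _)]
  exact sum_one_sub_single_mul i t _

lemma groupLassoObjective_shrinkGroup (hq : q ≠ 0) (W : (i : Fin s) → Fin (p i) → ℝ)
    (i : Fin s) {t : ℝ} (ht : t ≤ 1) :
    groupLassoObjective B Y lam q (shrinkGroup W i t) =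
      groupLassoObjective B Y lam q W
        + t * (groupResidual B Y W ⬝ᵥ (B i).mulVec (W i) - lam * lqNorm q (W i))
        + t ^ 2 / 2 * ((B i).mulVec (W i) ⬝ᵥ (B i).mulVec (W i)) := by
  have hsq : ∀ r v : Fin m → ℝ,
      ∑ k, (r k + t * v k) ^ 2 = ∑ k, r k ^ 2 + 2 * t * (r ⬝ᵥ v) + t ^ 2 * (v ⬝ᵥ v) := by
    intro r v
    simp only [dotProduct, Finset.mul_sum, ← Finset.sum_add_distrib]
    exact Finset.sum_congr rfl fun k _ => by ring
  simp only [groupLassoObjective, groupResidual_shrinkGroup, sum_lqNorm_shrinkGroup hq W i ht,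
    Pi.add_apply, Pi.smul_apply, smul_eq_mul, hsq]
  ring

lemma mul_lqNorm_le_dotProduct_of_isMinOn (hq : q ≠ 0) {W : (i : Fin s) → Fin (p i) → ℝ}
    (hW : IsMinOn (groupLassoObjective B Y lam q) Set.univ W) (i : Fin s) :
    lam * lqNorm q (W i) ≤ ((B i)ᵀ.mulVec (groupResidual B Y W)) ⬝ᵥ W i := by
  rw [mulVec_transpose, ← dotProduct_mulVec, ← sub_nonpos]
  refine nonpos_of_forall_le_mul (c := (B i).mulVec (W i) ⬝ᵥ (B i).mulVec (W i) / 2)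
    fun t ht ht1 => ?_
  have := isMinOn_univ_iff.mp hW (shrinkGroup W i t)
  rw [groupLassoObjective_shrinkGroup hq W i ht1] at this
  nlinarith

end GroupLasso

theorem stmt18_general {m s : ℕ} (p : Fin s → ℕ)
    (B : (i : Fin s) → Matrix (Fin m) (Fin (p i)) ℝ) (Y : Fin m → ℝ)
    (lam : ℝ) (q qb : ℝ≥0∞) (hq : 1 ≤ q)
    (hconj : 1 / q + 1 / qb = 1)
    (W : (i : Fin s) → Fin (p i) → ℝ)
    (hW : ∀ W' : (i : Fin s) → Fin (p i) → ℝ,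
      (1 / 2) * ∑ k, (Y k - ∑ i, (B i).mulVec (W i) k) ^ 2 +
          lam * ∑ i, lqNorm q (W i) ≤
        (1 / 2) * ∑ k, (Y k - ∑ i, (B i).mulVec (W' i) k) ^ 2 +
          lam * ∑ i, lqNorm q (W' i))
    (i : Fin s)
    (hscr : lqNorm qb
        ((B i)ᵀ.mulVec (fun k => Y k - ∑ j, (B j).mulVec (W j) k)) < lam) :
    W i = 0 := by
  have : q.HolderConjugate qb :=
    ENNReal.holderConjugate_iff.mpr (by simpa only [one_div] using hconj)
  by_contra hne
  have hopt := mul_lqNorm_le_dotProduct_of_isMinOn (zero_lt_one.trans_le hq).ne'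
    (isMinOn_univ_iff.mpr hW) i
  have hholder := dotProduct_le_lqNorm_mul_lqNorm (q := q) (qb := qb)
    ((B i)ᵀ.mulVec (groupResidual B Y W)) (W i)
  have hlt := mul_lt_mul_of_pos_right hscr (lqNorm_pos (q := q) hne)
  exact (hopt.trans hholder).not_gt hlt

/-- Let `W* = (w*₁,…,w*_s)` be a minimizer of
`f(W) = (1/2)‖Y − Σᵢ Bᵢwᵢ‖₂² + λΣᵢ‖wᵢ‖_q`.  If
`‖Bᵢᵀ(Y − Σⱼ Bⱼw*ⱼ)‖_{q̄} < λ` for some group index `i`, then `w*ᵢ = 0`. -/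
theorem stmt18 {m s : ℕ} (p : Fin s → ℕ)
    (B : (i : Fin s) → Matrix (Fin m) (Fin (p i)) ℝ) (Y : Fin m → ℝ)
    (lam : ℝ) (hlam : 0 < lam) (q qb : ℝ≥0∞) (hq : 1 ≤ q)
    (hconj : 1 / q + 1 / qb = 1)
    (W : (i : Fin s) → Fin (p i) → ℝ)
    (hW : ∀ W' : (i : Fin s) → Fin (p i) → ℝ,
      (1 / 2) * ∑ k, (Y k - ∑ i, (B i).mulVec (W i) k) ^ 2 +
          lam * ∑ i, lqNorm q (W i) ≤
        (1 / 2) * ∑ k, (Y k - ∑ i, (B i).mulVec (W' i) k) ^ 2 +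
          lam * ∑ i, lqNorm q (W' i))
    (i : Fin s)
    (hscr : lqNorm qb
        ((B i)ᵀ.mulVec (fun k => Y k - ∑ j, (B j).mulVec (W j) k)) < lam) :
    W i = 0 :=
  stmt18_general p B Y lam q qb hq hconj W hW i hscr
end
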